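/- arXiv:1910.00183 — 2 statements merged into one kernel-verified Lean document; each statement's English description precedes it below -/
import Mathlib

section
/- Let G be a connected undirected graph on vertices {1,…,n} (n ≥ 2) and d ≥ 1, and let ν = inf{ (∑_i ‖F(x)_i‖²)^{1/2} : x ∈ (ℝ^d)^n, ∑_i ‖x_i − x̄‖² = 1 }. Then for every configuration x in which not all agents are coincident, (∑_{i=1}^n ‖F(x)_i‖²)^{1/2} ≥ ν, and ν > 0. -/
/-!
Pairing the two bearings along each edge gives
`∑ᵢ ⟪F(x)ᵢ, x̄ - xᵢ⟫ = ½ ∑ᵢ ∑_{j ∈ Nᵢ} ‖xⱼ - xᵢ‖ =: S / 2`,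
so by Cauchy–Schwarz `S ≤ 2 ‖F(x)‖ ‖x - x̄‖`. In a connected graph any two agents are
joined by a path of fewer than `n` edges, whence `‖x - x̄‖² ≤ n³ S²`. On the sphere
`‖x - x̄‖ = 1` this yields `‖F(x)‖² ≥ 1 / (4 n³)`, and since `F` is invariant under positive
scaling, every non-coincident configuration can be moved onto that sphere without changing
`‖F(x)‖`.
-/

open Finset

/-- The bearing from agent `i` to agent `j`: the unit vector pointing from `x i` to `x j`,
or `0` when the agents coincide. -/
noncomputable def bearing {d n : ℕ} (x : Fin n → EuclideanSpace ℝ (Fin d)) (i j : Fin n) :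
    EuclideanSpace ℝ (Fin d) :=
  ‖x j - x i‖⁻¹ • (x j - x i)

/-- The bearing-only consensus vector field `F(x)_i = ∑_{j ∈ N_i} u_{ij}(x)`. -/
noncomputable def consField {d n : ℕ} (G : SimpleGraph (Fin n)) [DecidableRel G.Adj]
    (x : Fin n → EuclideanSpace ℝ (Fin d)) (i : Fin n) : EuclideanSpace ℝ (Fin d) :=
  ∑ j ∈ G.neighborFinset i, bearing x i j

namespace SimpleGraph

variable {V : Type*} {G : SimpleGraph V}

theorem sum_sum_neighborFinset_comm [Fintype V] [DecidableRel G.Adj] {M : Type*}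
    [AddCommMonoid M] (f : V → V → M) :
    ∑ i, ∑ j ∈ G.neighborFinset i, f i j = ∑ i, ∑ j ∈ G.neighborFinset i, f j i :=
  Finset.sum_comm' fun i j => by simp [adj_comm]

variable {E : Type*} [SeminormedAddCommGroup E]

theorem Walk.norm_sub_le_length_mul {f : V → E} {S : ℝ}
    (hf : ∀ a b, G.Adj a b → ‖f a - f b‖ ≤ S) {u v : V} (p : G.Walk u v) :
    ‖f u - f v‖ ≤ p.length * S := by
  induction p with
  | nil => simp
  | @cons a b c h q ih =>
    rw [Walk.length_cons, Nat.cast_succ, add_mul, one_mul]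
    linarith [norm_sub_le_norm_sub_add_norm_sub (f a) (f b) (f c), hf a b h]

theorem Connected.norm_sub_le_card_mul [Fintype V] (hG : G.Connected) {f : V → E} {S : ℝ}
    (hS : 0 ≤ S) (hf : ∀ a b, G.Adj a b → ‖f a - f b‖ ≤ S) (u v : V) :
    ‖f u - f v‖ ≤ Fintype.card V * S := by
  classical
  obtain ⟨p⟩ := hG u v
  calc ‖f u - f v‖ ≤ p.toPath.1.length * S := p.toPath.1.norm_sub_le_length_mul hf
    _ ≤ Fintype.card V * S := by gcongr; exact p.toPath.2.length_lt.le

end SimpleGraph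

theorem exists_not_forall_eq {ι E : Type*} [Nontrivial ι] [Nontrivial E] :
    ∃ x : ι → E, ¬ ∀ i j, x i = x j := by
  classical
  obtain ⟨i, j, hij⟩ := exists_pair_ne ι
  obtain ⟨a, b, hab⟩ := exists_pair_ne E
  exact ⟨Function.update (fun _ => b) i a, fun h => hab (by simpa [hij.symm] using h i j)⟩

section Centroid

variable {ι E : Type*} [Fintype ι]

theorem norm_sub_centroid_le [Nonempty ι] [SeminormedAddCommGroup E] [NormedSpace ℝ E]
    (x : ι → E) (i : ι) {R : ℝ} (hR : ∀ j, ‖x i - x j‖ ≤ R) :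
    ‖x i - (Fintype.card ι : ℝ)⁻¹ • ∑ j, x j‖ ≤ R := by
  have hcard : (0 : ℝ) < Fintype.card ι := by exact_mod_cast Fintype.card_pos
  have hsub : x i - (Fintype.card ι : ℝ)⁻¹ • ∑ j, x j
      = (Fintype.card ι : ℝ)⁻¹ • ∑ j, (x i - x j) := by
    rw [sum_sub_distrib, smul_sub, sum_const, card_univ, ← Nat.cast_smul_eq_nsmul ℝ,
      smul_smul, inv_mul_cancel₀ hcard.ne', one_smul]
  calc ‖x i - (Fintype.card ι : ℝ)⁻¹ • ∑ j, x j‖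
      ≤ (Fintype.card ι : ℝ)⁻¹ * ∑ j, ‖x i - x j‖ := by
        rw [hsub, norm_smul, Real.norm_of_nonneg (by positivity)]
        gcongr
        exact norm_sum_le _ _
    _ ≤ (Fintype.card ι : ℝ)⁻¹ * ∑ _j : ι, R := by gcongr with j; exact hR j
    _ = R := by rw [sum_const, card_univ, nsmul_eq_mul, inv_mul_cancel_left₀ hcard.ne']

theorem sum_norm_sub_smul_sum_sq_smul [SeminormedAddCommGroup E] [NormedSpace ℝ E]
    (x : ι → E) (a c : ℝ) :
    ∑ i, ‖(c • x) i - a • ∑ j, (c • x) j‖ ^ 2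
      = c ^ 2 * ∑ i, ‖x i - a • ∑ j, x j‖ ^ 2 := by
  simp only [Pi.smul_apply, ← smul_sum, smul_comm a c, ← smul_sub, norm_smul, mul_pow,
    Real.norm_eq_abs, sq_abs, mul_sum]

theorem sum_norm_sub_sq_pos [NormedAddCommGroup E] (x : ι → E) (c : E)
    (hx : ¬ ∀ i j, x i = x j) : 0 < ∑ i, ‖x i - c‖ ^ 2 := by
  refine (sum_nonneg fun i _ => sq_nonneg _).lt_of_ne fun h => hx fun i j => ?_
  have hc : ∀ k, x k = c := fun k => by
    simpa [sub_eq_zero] using (sum_eq_zero_iff_of_nonneg fun i _ => sq_nonneg ‖x i - c‖).1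
      h.symm k (mem_univ k)
  rw [hc i, hc j]

end Centroid

section Bearing

variable {d n : ℕ}

theorem bearing_swap (x : Fin n → EuclideanSpace ℝ (Fin d)) (i j : Fin n) :
    bearing x j i = -bearing x i j := by
  simp only [bearing, ← neg_sub (x j) (x i), norm_neg, smul_neg]

theorem bearing_smul {c : ℝ} (hc : 0 < c) (x : Fin n → EuclideanSpace ℝ (Fin d))
    (i j : Fin n) :
    bearing (c • x) i j = bearing x i j := by
  simp only [bearing, Pi.smul_apply, ← smul_sub, norm_smul, Real.norm_of_nonneg hc.le, mul_inv,
    smul_smul]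
  rw [mul_right_comm, inv_mul_cancel₀ hc.ne', one_mul]

theorem inner_bearing (x : Fin n → EuclideanSpace ℝ (Fin d)) (i j : Fin n) :
    inner ℝ (bearing x i j) (x j - x i) = ‖x j - x i‖ := by
  rw [bearing, real_inner_smul_left, real_inner_self_eq_norm_sq]
  rcases eq_or_ne ‖x j - x i‖ 0 with h | h
  · simp [h]
  · rw [sq, inv_mul_cancel_left₀ h]

variable (G : SimpleGraph (Fin n)) [DecidableRel G.Adj]

theorem consField_smul {c : ℝ} (hc : 0 < c) (x : Fin n → EuclideanSpace ℝ (Fin d)) :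
    consField G (c • x) = consField G x := by
  funext i
  simp only [consField, bearing_smul hc]

theorem sum_sum_norm_sub_eq_two_mul_sum_inner (x : Fin n → EuclideanSpace ℝ (Fin d))
    (c : EuclideanSpace ℝ (Fin d)) :
    ∑ i, ∑ j ∈ G.neighborFinset i, ‖x j - x i‖
      = 2 * ∑ i, inner ℝ (consField G x i) (c - x i) := by
  have hpair : ∀ i j, ‖x j - x i‖
      = inner ℝ (bearing x i j) (c - x i) + inner ℝ (bearing x j i) (c - x j) := by
    intro i j
    rw [bearing_swap x i j, inner_neg_left, ← sub_eq_add_neg, ← inner_sub_right,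
      sub_sub_sub_cancel_left, inner_bearing]
  calc ∑ i, ∑ j ∈ G.neighborFinset i, ‖x j - x i‖
      = ∑ i, ∑ j ∈ G.neighborFinset i, inner ℝ (bearing x i j) (c - x i)
        + ∑ i, ∑ j ∈ G.neighborFinset i, inner ℝ (bearing x j i) (c - x j) := by
        simp only [hpair, sum_add_distrib]
    _ = 2 * ∑ i, ∑ j ∈ G.neighborFinset i, inner ℝ (bearing x i j) (c - x i) := by
        rw [← SimpleGraph.sum_sum_neighborFinset_comm]; ring
    _ = 2 * ∑ i, inner ℝ (consField G x i) (c - x i) := by simp only [consField, sum_inner]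

theorem sum_sum_norm_sub_le (x : Fin n → EuclideanSpace ℝ (Fin d))
    (c : EuclideanSpace ℝ (Fin d)) :
    ∑ i, ∑ j ∈ G.neighborFinset i, ‖x j - x i‖
      ≤ 2 * (√(∑ i, ‖consField G x i‖ ^ 2) * √(∑ i, ‖x i - c‖ ^ 2)) := by
  rw [sum_sum_norm_sub_eq_two_mul_sum_inner G x c]
  gcongr
  calc ∑ i, inner ℝ (consField G x i) (c - x i)
      ≤ ∑ i, ‖consField G x i‖ * ‖x i - c‖ :=
        sum_le_sum fun i _ => (real_inner_le_norm _ _).trans_eq (by rw [norm_sub_rev])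
    _ ≤ _ := Real.sum_mul_le_sqrt_mul_sqrt _ _ _

theorem sum_norm_sub_centroid_sq_le (hG : G.Connected)
    (x : Fin n → EuclideanSpace ℝ (Fin d)) :
    ∑ i, ‖x i - (n : ℝ)⁻¹ • ∑ j, x j‖ ^ 2
      ≤ n ^ 3 * (∑ i, ∑ j ∈ G.neighborFinset i, ‖x j - x i‖) ^ 2 := by
  set S := ∑ i, ∑ j ∈ G.neighborFinset i, ‖x j - x i‖
  have hS : 0 ≤ S := by positivity
  have hedge : ∀ a b, G.Adj a b → ‖x a - x b‖ ≤ S := fun a b hab =>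
    calc ‖x a - x b‖ = ‖x b - x a‖ := norm_sub_rev _ _
      _ ≤ ∑ j ∈ G.neighborFinset a, ‖x j - x a‖ :=
          single_le_sum (fun j _ => norm_nonneg (x j - x a)) ((G.mem_neighborFinset a b).2 hab)
      _ ≤ S := single_le_sum (f := fun i => ∑ j ∈ G.neighborFinset i, ‖x j - x i‖)
          (fun i _ => by positivity) (mem_univ a)
  have : Nonempty (Fin n) := hG.nonempty
  have hcent : ∀ i, ‖x i - (n : ℝ)⁻¹ • ∑ j, x j‖ ≤ n * S := fun i => by
    simpa using norm_sub_centroid_le x i fun j => by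
      simpa using hG.norm_sub_le_card_mul hS hedge i j
  calc ∑ i, ‖x i - (n : ℝ)⁻¹ • ∑ j, x j‖ ^ 2
      ≤ ∑ _i : Fin n, ((n : ℝ) * S) ^ 2 :=
        sum_le_sum fun i _ => by gcongr; exact hcent i
    _ = n ^ 3 * S ^ 2 := by
        rw [sum_const, card_univ, Fintype.card_fin, nsmul_eq_mul]; ring

theorem inv_le_sum_norm_consField_sq (hG : G.Connected)
    (x : Fin n → EuclideanSpace ℝ (Fin d))
    (hx : ∑ i, ‖x i - (n : ℝ)⁻¹ • ∑ j, x j‖ ^ 2 = 1) :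
    (4 * n ^ 3 : ℝ)⁻¹ ≤ ∑ i, ‖consField G x i‖ ^ 2 := by
  have hspread := sum_norm_sub_centroid_sq_le G hG x
  have hcs := sum_sum_norm_sub_le G x ((n : ℝ)⁻¹ • ∑ j, x j)
  rw [hx] at hspread
  rw [hx, Real.sqrt_one, mul_one] at hcs
  set S := ∑ i, ∑ j ∈ G.neighborFinset i, ‖x j - x i‖
  set Q := ∑ i, ‖consField G x i‖ ^ 2
  have hS : 0 ≤ S := by positivity
  have hSQ : S ^ 2 ≤ 4 * Q := by nlinarith [Real.sq_sqrt (by positivity : 0 ≤ Q)]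
  have hn : (0 : ℝ) < n := Nat.cast_pos.2 (Fin.pos_iff_nonempty.2 hG.nonempty)
  rw [inv_le_iff_one_le_mul₀ (by positivity)]
  nlinarith [mul_le_mul_of_nonneg_left hSQ (by positivity : (0 : ℝ) ≤ n ^ 3)]

theorem exists_sum_norm_sub_centroid_sq_eq_one (x : Fin n → EuclideanSpace ℝ (Fin d))
    (hx : ¬ ∀ i j, x i = x j) :
    ∃ y : Fin n → EuclideanSpace ℝ (Fin d),
      ∑ i, ‖y i - (n : ℝ)⁻¹ • ∑ j, y j‖ ^ 2 = 1 ∧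
        consField G y = consField G x := by
  set V := ∑ i, ‖x i - (n : ℝ)⁻¹ • ∑ j, x j‖ ^ 2
  have hV : 0 < V := sum_norm_sub_sq_pos x _ hx
  refine ⟨(√V)⁻¹ • x, ?_, consField_smul G (by positivity) x⟩
  rw [sum_norm_sub_smul_sum_sq_smul, inv_pow, Real.sq_sqrt hV.le, inv_mul_cancel₀ hV.ne']

end Bearing

theorem stmt_3 {d n : ℕ} (hd : 1 ≤ d) (hn : 2 ≤ n)
    (G : SimpleGraph (Fin n)) [DecidableRel G.Adj] (hG : G.Connected)
    (ν : ℝ)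
    (hν : ν = sInf { r : ℝ | ∃ x : Fin n → EuclideanSpace ℝ (Fin d),
        (∑ i, ‖x i - (n : ℝ)⁻¹ • ∑ j, x j‖ ^ 2) = 1 ∧
        r = Real.sqrt (∑ i, ‖consField G x i‖ ^ 2) }) :
    (∀ x : Fin n → EuclideanSpace ℝ (Fin d), (¬ ∀ i j, x i = x j) →
        ν ≤ Real.sqrt (∑ i, ‖consField G x i‖ ^ 2)) ∧ 0 < ν := by
  have hn0 : (0 : ℝ) < n := by exact_mod_cast (by omega : 0 < n)
  have : Nontrivial (Fin n) := Fin.nontrivial_iff_two_le.2 hn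
  have : Nonempty (Fin d) := ⟨⟨0, hd⟩⟩
  subst hν
  constructor
  · intro x hx
    obtain ⟨y, hy, hyx⟩ := exists_sum_norm_sub_centroid_sq_eq_one G x hx
    exact csInf_le ⟨0, by rintro r ⟨z, -, rfl⟩; positivity⟩ ⟨y, hy, by rw [hyx]⟩
  · obtain ⟨x, hx⟩ := exists_not_forall_eq (ι := Fin n) (E := EuclideanSpace ℝ (Fin d))
    obtain ⟨y, hy, -⟩ := exists_sum_norm_sub_centroid_sq_eq_one G x hx
    refine lt_of_lt_of_le (by positivity : 0 < √(4 * n ^ 3 : ℝ)⁻¹) ?_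
    exact le_csInf ⟨_, y, hy, rfl⟩ fun r ⟨z, hz, hr⟩ =>
      hr ▸ Real.sqrt_le_sqrt (inv_le_sum_norm_consField_sq G hG z hz)
end

section
/- Let σ be a cyclic permutation of {1,…,n} (so the directed graph with edges (i, σ(i)) is a single directed cycle), d ≥ 1, and for each i let u*_i ∈ ℝ^d be a unit vector. Suppose x : [0,T] → (ℝ^d)^n is differentiable, satisfies xᵢ′(t) = u_{i,σ(i)}(x(t)) − u*_i for all i and t, and x_i(t) ≠ x_{σ(i)}(t) for all i and t ∈ [0,T]. Then ψ_c(x) = ∑_{i=1}^n (1/2)‖x_{σ(i)} − x_i‖·‖u_{i,σ(i)}(x) − u*_i‖² satisfies d/dt ψ_c(x(t)) = −(1/2) ∑_{i=1}^n ‖xᵢ′(t) − x_{σ(i)}′(t)‖² ≤ 0. -/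
open Finset

/-- The formation potential for a directed cycle given by the permutation `σ`:
`ψ_c(x) = ∑_i (1/2) ‖x_{σ(i)} - x_i‖ ‖u_{i,σ(i)}(x) - u*_i‖²`. -/
noncomputable def cyclePotential {d n : ℕ} (σ : Equiv.Perm (Fin n))
    (ustar : Fin n → EuclideanSpace ℝ (Fin d))
    (x : Fin n → EuclideanSpace ℝ (Fin d)) : ℝ :=
  ∑ i, (1 / 2) * ‖x (σ i) - x i‖ * ‖bearing x i (σ i) - ustar i‖ ^ 2

/-! Along a motion with `x_i(t) ≠ x_{σ(i)}(t)`, each edge term of the potential equals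
`‖z‖ - ⟪z, u*_i⟫` with `z = x_{σ(i)} - x_i`, so its derivative is `⟪e_i, z'⟫`, where
`e_i = u_{i,σ(i)} - u*_i` is exactly the velocity `x_i'` of agent `i`. Summing
`⟪e_i, e_{σ(i)} - e_i⟫ = (‖e_{σ(i)}‖² - ‖e_i‖² - ‖e_i - e_{σ(i)}‖²) / 2` over `i`, the first two
terms cancel because `σ` is a permutation. -/

section InnerProductSpace

open scoped InnerProductSpace

variable {E : Type*} [NormedAddCommGroup E] [InnerProductSpace ℝ E]

theorem HasDerivAt.norm {f : ℝ → E} {f' : E} {t : ℝ} (hf : HasDerivAt f f' t)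
    (h0 : f t ≠ 0) :
    HasDerivAt (fun s => ‖f s‖) ⟪‖f t‖⁻¹ • f t, f'⟫_ℝ t := by
  have hnorm : ‖f t‖ ≠ 0 := norm_ne_zero_iff.mpr h0
  have hsqrt := hf.norm_sq.sqrt (pow_ne_zero 2 hnorm)
  simp only [Real.sqrt_sq (norm_nonneg _)] at hsqrt
  convert hsqrt using 1
  rw [real_inner_smul_left]
  field_simp

theorem half_mul_norm_mul_norm_inv_smul_sub_sq {z u : E} (hz : z ≠ 0) (hu : ‖u‖ = 1) :
    1 / 2 * ‖z‖ * ‖‖z‖⁻¹ • z - u‖ ^ 2 = ‖z‖ - ⟪z, u⟫_ℝ := by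
  have hnorm : ‖z‖ ≠ 0 := norm_ne_zero_iff.mpr hz
  have hunit : ‖‖z‖⁻¹ • z‖ = 1 := by
    rw [norm_smul, norm_inv, norm_norm, inv_mul_cancel₀ hnorm]
  rw [norm_sub_sq_real, hunit, hu, real_inner_smul_left]
  field_simp
  ring

theorem HasDerivAt.norm_sub_inner {z : ℝ → E} {z' u : E} {t : ℝ} (hz : HasDerivAt z z' t)
    (h0 : z t ≠ 0) :
    HasDerivAt (fun s => ‖z s‖ - ⟪z s, u⟫_ℝ) ⟪‖z t‖⁻¹ • z t - u, z'⟫_ℝ t := by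
  have hinner : HasDerivAt (fun s => ⟪z s, u⟫_ℝ) ⟪u, z'⟫_ℝ t := by
    simpa [real_inner_comm] using hz.inner ℝ (hasDerivAt_const t u)
  rw [inner_sub_left]
  exact (hz.norm h0).fun_sub hinner

theorem Equiv.Perm.sum_inner_sub_eq {ι : Type*} [Fintype ι] (σ : Equiv.Perm ι) (a : ι → E) :
    ∑ i, ⟪a i, a (σ i) - a i⟫_ℝ = -(1 / 2) * ∑ i, ‖a i - a (σ i)‖ ^ 2 := by
  have hterm : ∀ i, ⟪a i, a (σ i) - a i⟫_ℝ
      = (‖a (σ i)‖ ^ 2 - ‖a i‖ ^ 2) / 2 - ‖a i - a (σ i)‖ ^ 2 / 2 := by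
    intro i
    rw [inner_sub_right, real_inner_self_eq_norm_sq, norm_sub_sq_real]
    ring
  have hcancel : ∑ i, (‖a (σ i)‖ ^ 2 - ‖a i‖ ^ 2) = 0 := by
    rw [sum_sub_distrib, Equiv.sum_comp σ (fun i => ‖a i‖ ^ 2), sub_self]
  rw [sum_congr rfl fun i _ => hterm i, sum_sub_distrib, ← sum_div, ← sum_div, hcancel]
  ring

end InnerProductSpace

theorem hasDerivAt_cyclePotential {d n : ℕ} {σ : Equiv.Perm (Fin n)}
    {ustar : Fin n → EuclideanSpace ℝ (Fin d)} (hunit : ∀ i, ‖ustar i‖ = 1)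
    {x : ℝ → Fin n → EuclideanSpace ℝ (Fin d)} {v : Fin n → EuclideanSpace ℝ (Fin d)} {t : ℝ}
    (hx : ∀ i, HasDerivAt (fun s => x s i) (v i) t) (hfree : ∀ i, x t i ≠ x t (σ i)) :
    HasDerivAt (fun s => cyclePotential σ ustar (x s))
      (∑ i, inner ℝ (bearing (x t) i (σ i) - ustar i) (v (σ i) - v i)) t := by
  have hedge : ∀ i, HasDerivAt (fun s => x s (σ i) - x s i) (v (σ i) - v i) t :=
    fun i => (hx (σ i)).sub (hx i)
  have hedge_ne : ∀ i, x t (σ i) - x t i ≠ 0 := fun i => sub_ne_zero.mpr (hfree i).symm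
  have hnear : ∀ᶠ s in nhds t, ∀ i, x s (σ i) - x s i ≠ 0 :=
    Filter.eventually_all.mpr fun i => (hedge i).continuousAt.eventually_ne (hedge_ne i)
  have hpot : (fun s => cyclePotential σ ustar (x s)) =ᶠ[nhds t]
      fun s => ∑ i, (‖x s (σ i) - x s i‖ - inner ℝ (x s (σ i) - x s i) (ustar i)) := by
    filter_upwards [hnear] with s hs
    exact sum_congr rfl fun i _ => half_mul_norm_mul_norm_inv_smul_sub_sq (hs i) (hunit i)
  exact hpot.hasDerivAt_iff.mpr
    (HasDerivAt.fun_sum fun i _ => (hedge i).norm_sub_inner (hedge_ne i))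

theorem stmt_11_general {d n : ℕ}
    (σ : Equiv.Perm (Fin n))
    (ustar : Fin n → EuclideanSpace ℝ (Fin d))
    (hunit : ∀ i, ‖ustar i‖ = 1)
    (T : ℝ)
    (x : ℝ → Fin n → EuclideanSpace ℝ (Fin d))
    (hode : ∀ i, ∀ t ∈ Set.Icc (0 : ℝ) T,
      HasDerivAt (fun s => x s i) (bearing (x t) i (σ i) - ustar i) t)
    (hfree : ∀ i, ∀ t ∈ Set.Icc (0 : ℝ) T, x t i ≠ x t (σ i)) :
    ∀ t ∈ Set.Icc (0 : ℝ) T,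
      HasDerivAt (fun s => cyclePotential σ ustar (x s))
        (-(1 / 2) * ∑ i, ‖(bearing (x t) i (σ i) - ustar i) -
            (bearing (x t) (σ i) (σ (σ i)) - ustar (σ i))‖ ^ 2) t ∧
      -(1 / 2) * ∑ i, ‖(bearing (x t) i (σ i) - ustar i) -
            (bearing (x t) (σ i) (σ (σ i)) - ustar (σ i))‖ ^ 2 ≤ 0 := by
  intro t ht
  have hderiv := hasDerivAt_cyclePotential hunit (fun i => hode i t ht) (fun i => hfree i t ht)
  rw [σ.sum_inner_sub_eq (fun i => bearing (x t) i (σ i) - ustar i)] at hderiv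
  refine ⟨hderiv, mul_nonpos_of_nonpos_of_nonneg (by norm_num) ?_⟩
  exact sum_nonneg fun i _ => sq_nonneg _

theorem stmt_11 {d n : ℕ} (hd : 1 ≤ d)
    (σ : Equiv.Perm (Fin n)) (hcyc : σ.IsCycle) (hsupp : σ.support = Finset.univ)
    (ustar : Fin n → EuclideanSpace ℝ (Fin d))
    (hunit : ∀ i, ‖ustar i‖ = 1)
    (T : ℝ) (hT : 0 ≤ T)
    (x : ℝ → Fin n → EuclideanSpace ℝ (Fin d))
    (hode : ∀ i, ∀ t ∈ Set.Icc (0 : ℝ) T,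
      HasDerivAt (fun s => x s i) (bearing (x t) i (σ i) - ustar i) t)
    (hfree : ∀ i, ∀ t ∈ Set.Icc (0 : ℝ) T, x t i ≠ x t (σ i)) :
    ∀ t ∈ Set.Icc (0 : ℝ) T,
      HasDerivAt (fun s => cyclePotential σ ustar (x s))
        (-(1 / 2) * ∑ i, ‖(bearing (x t) i (σ i) - ustar i) -
            (bearing (x t) (σ i) (σ (σ i)) - ustar (σ i))‖ ^ 2) t ∧
      -(1 / 2) * ∑ i, ‖(bearing (x t) i (σ i) - ustar i) -
            (bearing (x t) (σ i) (σ (σ i)) - ustar (σ i))‖ ^ 2 ≤ 0 :=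
  stmt_11_general σ ustar hunit T x hode hfree
end
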